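/- arXiv:1612.02928 — 2 statements merged into one kernel-verified Lean document; each statement's English description precedes it below -/
import Mathlib

section
/- Let W ∈ ℂ, let (B_i) be the base W-Fibonacci sequence and suppose B_N = 0 with W ≠ 0. Let (F_i), (G_i) be W-Fibonacci sequences with F_0 = z_1 z_2 W, F_1 = z_1(z_3−z_2), G_1 = z_3−z_2, G_2 = z_1 W for nonzero complex numbers z_1, z_2, z_3 with z_3 ≠ z_2. Then F_1 G_{N+1} − F_{N+1} G_1 = 0 and F_0 G_{N+2} − F_N G_2 = 0. -/
/-- A `W`-Fibonacci sequence: `F (i+1) = W * F i + F (i-1)` for all integers `i`. -/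
def IsFib (W : ℂ) (F : ℤ → ℂ) : Prop := ∀ i : ℤ, F (i + 1) = W * F i + F (i - 1)

/-! For fixed `j k`, both `i ↦ F j * G (i + k)` and `i ↦ F (i + j) * G k` are `W`-Fibonacci, so
their difference is a `W`-Fibonacci sequence vanishing at `i = 0`. Such a sequence is determined
by its value at `1`, hence is a multiple of the base sequence `B` and vanishes wherever `B` does. -/

namespace IsFib

variable {W : ℂ} {B F G H : ℤ → ℂ}

theorem comp_add_const (hF : IsFib W F) (k : ℤ) : IsFib W (fun i => F (i + k)) := by
  intro i
  have h := hF (i + k)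
  rwa [show i + k + 1 = i + 1 + k by ring, show i + k - 1 = i - 1 + k by ring] at h

theorem linear_comb (hF : IsFib W F) (hG : IsFib W G) (a b : ℂ) :
    IsFib W (fun i => a * F i + b * G i) := by
  intro i
  simp only [hF i, hG i]
  ring

theorem eq_zero (hH : IsFib W H) (h0 : H 0 = 0) (h1 : H 1 = 0) (i : ℤ) : H i = 0 := by
  suffices ∀ i : ℤ, H i = 0 ∧ H (i + 1) = 0 from (this i).1
  intro i
  induction i using Int.induction_on with
  | zero => exact ⟨h0, h1⟩
  | succ k ih => exact ⟨ih.2, by rw [hH, add_sub_cancel_right, ih.1, ih.2, mul_zero, add_zero]⟩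
  | pred k ih =>
    refine ⟨?_, by rw [sub_add_cancel]; exact ih.1⟩
    linear_combination ih.2 - W * ih.1 - hH (-k : ℤ)

theorem eq_mul_base (hH : IsFib W H) (hH0 : H 0 = 0)
    (hB : IsFib W B) (hB0 : B 0 = 0) (hB1 : B 1 = 1) (i : ℤ) : H i = H 1 * B i := by
  have hD := hH.linear_comb hB 1 (-H 1)
  have := hD.eq_zero (by simp [hH0, hB0]) (by simp [hB1]) i
  linear_combination this

theorem cross_eq_zero_of_base_eq_zero (hB : IsFib W B) (hB0 : B 0 = 0) (hB1 : B 1 = 1)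
    (hF : IsFib W F) (hG : IsFib W G) (j k : ℤ) {N : ℤ} (hBN : B N = 0) :
    F j * G (N + k) - F (N + j) * G k = 0 := by
  have hH : IsFib W (fun i => F j * G (i + k) + (-G k) * F (i + j)) :=
    (hG.comp_add_const k).linear_comb (hF.comp_add_const j) _ _
  have := hH.eq_mul_base (by simp only [zero_add]; ring) hB hB0 hB1 N
  rw [hBN, mul_zero] at this
  linear_combination this

end IsFib

theorem torus_knot_closing_equations_general (W : ℂ)
    (B F G : ℤ → ℂ) (hB : IsFib W B) (hB0 : B 0 = 0) (hB1 : B 1 = 1)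
    (N : ℤ) (hBN : B N = 0)
    (hF : IsFib W F) (hG : IsFib W G) :
    F 1 * G (N + 1) - F (N + 1) * G 1 = 0 ∧
    F 0 * G (N + 2) - F N * G 2 = 0 := by
  refine ⟨hB.cross_eq_zero_of_base_eq_zero hB0 hB1 hF hG 1 1 hBN, ?_⟩
  simpa only [add_zero] using hB.cross_eq_zero_of_base_eq_zero hB0 hB1 hF hG 0 2 hBN

theorem torus_knot_closing_equations (W : ℂ) (hW : W ≠ 0)
    (B F G : ℤ → ℂ) (hB : IsFib W B) (hB0 : B 0 = 0) (hB1 : B 1 = 1)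
    (N : ℤ) (hBN : B N = 0)
    (hF : IsFib W F) (hG : IsFib W G)
    (z1 z2 z3 : ℂ) (hz1 : z1 ≠ 0) (hz2 : z2 ≠ 0) (hz3 : z3 ≠ 0) (hz32 : z3 ≠ z2)
    (hF0 : F 0 = z1 * z2 * W) (hF1 : F 1 = z1 * (z3 - z2))
    (hG1 : G 1 = z3 - z2) (hG2 : G 2 = z1 * W) :
    F 1 * G (N + 1) - F (N + 1) * G 1 = 0 ∧
    F 0 * G (N + 2) - F N * G 2 = 0 :=
  torus_knot_closing_equations_general W B F G hB hB0 hB1 N hBN hF hG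
end

section
/- Let w_a, w_b, w_c, w_d be nonzero complex numbers with w_a w_c − w_b w_d ≠ 0 and m = 1 (boundary parabolic case). Define τ_a = (w_b − w_a)(w_d − w_a)/(w_b w_d − w_a w_c), τ_b = (w_a w_c − w_b w_d)/((w_a − w_b)(w_c − w_b)), τ_c = (w_b − w_c)(w_d − w_c)/(w_b w_d − w_a w_c), τ_d = (w_a w_c − w_b w_d)/((w_a − w_d)(w_c − w_d)), assuming all denominators nonzero. Then τ_a · τ_b · τ_c · τ_d = 1. Moreover τ_a = 1 if and only if w_a − w_b + w_c − w_d = 0, and in that case τ_a = τ_b = τ_c = τ_d = 1. -/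
theorem region_variable_tau_identities (wa wb wc wd : ℂ)
    (hwa : wa ≠ 0) (hwb : wb ≠ 0) (hwc : wc ≠ 0) (hwd : wd ≠ 0)
    (hmid : wa * wc - wb * wd ≠ 0)
    (hab : wa ≠ wb) (hcb : wc ≠ wb) (had : wa ≠ wd) (hcd : wc ≠ wd)
    (τa τb τc τd : ℂ)
    (ha : τa = (wb - wa) * (wd - wa) / (wb * wd - wa * wc))
    (hb : τb = (wa * wc - wb * wd) / ((wa - wb) * (wc - wb)))
    (hc : τc = (wb - wc) * (wd - wc) / (wb * wd - wa * wc))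
    (hd : τd = (wa * wc - wb * wd) / ((wa - wd) * (wc - wd))) :
    τa * τb * τc * τd = 1 ∧
    (τa = 1 ↔ wa - wb + wc - wd = 0) ∧
    (τa = 1 → τb = 1 ∧ τc = 1 ∧ τd = 1) := by
  have hmid' : wb * wd - wa * wc ≠ 0 := by
    intro h; apply hmid; linear_combination -h
  have hab' : wa - wb ≠ 0 := sub_ne_zero.mpr hab
  have hcb' : wc - wb ≠ 0 := sub_ne_zero.mpr hcb
  have had' : wa - wd ≠ 0 := sub_ne_zero.mpr had
  have hcd' : wc - wd ≠ 0 := sub_ne_zero.mpr hcd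
  subst ha hb hc hd
  have key : ((wb - wa) * (wd - wa) / (wb * wd - wa * wc) = 1) ↔
      wa - wb + wc - wd = 0 := by
    rw [div_eq_one_iff_eq hmid']
    constructor
    · intro h
      have h2 : wa * (wa - wb + wc - wd) = 0 := by linear_combination h
      exact (mul_eq_zero.mp h2).resolve_left hwa
    · intro h; linear_combination wa * h
  refine ⟨?_, key, ?_⟩
  · rw [div_mul_div_comm, div_mul_div_comm, div_mul_div_comm,
      div_eq_one_iff_eq (by
        exact mul_ne_zero (mul_ne_zero (mul_ne_zero hmid'
          (mul_ne_zero hab' hcb')) hmid') (mul_ne_zero had' hcd'))]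
    ring
  · intro h
    have k := key.mp h
    refine ⟨?_, ?_, ?_⟩
    · rw [div_eq_one_iff_eq (mul_ne_zero hab' hcb')]
      linear_combination wb * k
    · rw [div_eq_one_iff_eq hmid']
      linear_combination wc * k
    · rw [div_eq_one_iff_eq (mul_ne_zero had' hcd')]
      linear_combination wd * k
end
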